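/- For every α ∈ [3/2, 2] and every p ∈ (0,1), the frequency of the digit 0 in the random signed binary expansions, given by π_0(α,p) = (1-p)·μ_p([-1/2,(1-α)/2]) + μ_p(((1-α)/2,(α-1)/2)) + p·μ_p([(α-1)/2,1/2]), equals exactly 1/2, where μ_p is the unique stationary probability measure of the random symmetric doubling map R_α, whose density equals 1/α on [1-α, α-1]. -/

import Mathlib

/-!
On `[1-α, α-1]` the stationary density is the constant `1/α`, and for `α ≥ 3/2` all three
intervals entering `π_0(α,p)` lie in `[1-α, α-1]`. Their masses are therefore
`(2-α)/(2α)`, `(α-1)/α` and `(2-α)/(2α)`, and the `p`-weights of the two outer intervals add up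
to `(1-p) + p = 1`, giving `π_0 = (α-1)/α + (2-α)/(2α) = 1/2` independently of `p`.
-/

open MeasureTheory Set

/-- The two branches `T_{α,0}` (`j = false`) and `T_{α,1}` (`j = true`) of the random
symmetric doubling map. -/
noncomputable def randSymDoubling (α : ℝ) (j : Bool) (x : ℝ) : ℝ :=
  match j with
  | false => if x ≤ (1-α)/2 then 2*x + α else if x ≤ 1/2 then 2*x else 2*x - α
  | true  => if x < -(1/2) then 2*x + α else if x < (α-1)/2 then 2*x else 2*x - α

lemma toReal_measure_eq_measureReal_mul_of_density_eqOn {X : Type*} [MeasurableSpace X]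
    {μ ν : Measure X} {f : X → ℝ} {s B : Set X} {c : ℝ}
    (hdens : ∀ B : Set X, MeasurableSet B → μ B = ENNReal.ofReal (∫ x in B, f x ∂ν))
    (hf : ∀ x ∈ s, f x = c) (hc : 0 ≤ c) (hB : MeasurableSet B) (hBs : B ⊆ s) :
    (μ B).toReal = ν.real B * c := by
  rw [hdens B hB, setIntegral_congr_fun hB (fun x hx => hf x (hBs hx)), setIntegral_const,
    smul_eq_mul, ENNReal.toReal_ofReal (by positivity)]

theorem stmt17_general (α p : ℝ) (hα : α ∈ Set.Icc (3/2 : ℝ) 2)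
    (μ : Measure ℝ)
    (f : ℝ → ℝ)
    (hdens : ∀ B : Set ℝ, MeasurableSet B → μ B = ENNReal.ofReal (∫ x in B, f x))
    (hf : ∀ x ∈ Set.Icc (1-α) (α-1), f x = 1/α) :
    (1-p) * (μ (Set.Icc (-(1/2) : ℝ) ((1-α)/2))).toReal
      + (μ (Set.Ioo ((1-α)/2) ((α-1)/2))).toReal
      + p * (μ (Set.Icc ((α-1)/2) (1/2 : ℝ))).toReal = 1/2 := by
  obtain ⟨hα₁, hα₂⟩ := hα
  have hα₀ : 0 < α := by linarith
  have mass {B : Set ℝ} (hB : MeasurableSet B) (hBs : B ⊆ Icc (1-α) (α-1)) :=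
    toReal_measure_eq_measureReal_mul_of_density_eqOn hdens hf (by positivity) hB hBs
  rw [mass measurableSet_Icc (Icc_subset_Icc (by linarith) (by linarith)),
    mass measurableSet_Ioo (Ioo_subset_Icc_self.trans (Icc_subset_Icc (by linarith) (by linarith))),
    mass measurableSet_Icc (Icc_subset_Icc (by linarith) (by linarith)),
    Real.volume_real_Icc_of_le (by linarith), Real.volume_real_Ioo_of_le (by linarith),
    Real.volume_real_Icc_of_le (by linarith)]
  field_simp
  ring

/-- For every `α ∈ [3/2,2]` and `p ∈ (0,1)`, with `μ_p` the unique stationary probability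
measure of the random symmetric doubling map `R_α`, whose density `f` equals `1/α` on
`[1-α, α-1]`, the frequency of the digit `0`,
`π_0(α,p) = (1-p)·μ_p([-1/2,(1-α)/2]) + μ_p(((1-α)/2,(α-1)/2)) + p·μ_p([(α-1)/2,1/2])`,
equals exactly `1/2`. -/
theorem stmt17 (α p : ℝ) (hα : α ∈ Set.Icc (3/2 : ℝ) 2) (hp : p ∈ Set.Ioo (0:ℝ) 1)
    (μ : Measure ℝ) (hprob : IsProbabilityMeasure μ)
    (hstat : ∀ B : Set ℝ, MeasurableSet B →
      μ B = ENNReal.ofReal p * μ (randSymDoubling α false ⁻¹' B)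
          + ENNReal.ofReal (1-p) * μ (randSymDoubling α true ⁻¹' B))
    (f : ℝ → ℝ)
    (hdens : ∀ B : Set ℝ, MeasurableSet B → μ B = ENNReal.ofReal (∫ x in B, f x))
    (hf : ∀ x ∈ Set.Icc (1-α) (α-1), f x = 1/α) :
    (1-p) * (μ (Set.Icc (-(1/2) : ℝ) ((1-α)/2))).toReal
      + (μ (Set.Ioo ((1-α)/2) ((α-1)/2))).toReal
      + p * (μ (Set.Icc ((α-1)/2) (1/2 : ℝ))).toReal = 1/2 :=
  stmt17_general α p hα μ f hdens hf
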